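/- Each dressed Gauss operator and each flux operator maps the zero-flux subspace into itself, and any two of the stabilizer generators (dressed Gauss operators of any colours and flux operators of any colours) commute when restricted to the zero-flux subspace. Moreover every vector ψ of the code space is supported on zero-flux configurations (ψ(a,b,c) = 0 unless da = 0, db = 0 and dc = 0), so all stabilizer generators pairwise commute on the code space (Lemma 3, conclusion: the stabilizers commute on the zero-flux subspace B = 1). -/

import Mathlib

noncomputable section

open scoped BigOperators

/-- Transport a cochain along an equality of degrees. -/
def cellCast {cells : ℕ → Type} {i j : ℕ} (h : i = j) (x : cells i → ZMod 2) :
    cells j → ZMod 2 :=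
  fun σ => x (cast (congrArg cells h.symm) σ)

/-- A *cochain system* of dimension `N` over `𝔽₂ = ZMod 2`: finite sets of cells in
each degree, `𝔽₂`-linear coboundary maps `d` with `d ∘ d = 0`, `𝔽₂`-bilinear associative
cup products satisfying the Leibniz rule, and an `𝔽₂`-linear integral on top-degree
cochains satisfying the Stokes identity.  (These are the structures carried by the `𝔽₂`
cellular cochains of a closed Poincaré CW complex.) -/
structure CochainSystem (N : ℕ) where
  cells : ℕ → Type
  fintypeCells : ∀ i, Fintype (cells i)
  decEqCells : ∀ i, DecidableEq (cells i)
  d : ∀ i, (cells i → ZMod 2) →ₗ[ZMod 2] (cells (i + 1) → ZMod 2)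
  cup : ∀ i j, (cells i → ZMod 2) →ₗ[ZMod 2]
    ((cells j → ZMod 2) →ₗ[ZMod 2] (cells (i + j) → ZMod 2))
  integ : (cells N → ZMod 2) →ₗ[ZMod 2] ZMod 2
  d_comp_d : ∀ (i : ℕ) (x : cells i → ZMod 2), d (i + 1) (d i x) = 0
  cup_assoc : ∀ {i j k : ℕ} (u : cells i → ZMod 2) (v : cells j → ZMod 2)
    (w : cells k → ZMod 2),
    cup (i + j) k (cup i j u v) w
      = cellCast (Nat.add_assoc i j k).symm (cup i (j + k) u (cup j k v w))
  leibniz : ∀ {i j : ℕ} (u : cells i → ZMod 2) (v : cells j → ZMod 2),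
    d (i + j) (cup i j u v)
      = cellCast (by omega : i + 1 + j = i + j + 1) (cup (i + 1) j (d i u) v)
        + cellCast (by omega : i + (j + 1) = i + j + 1) (cup i (j + 1) u (d j v))
  stokes : ∀ (k : ℕ) (hk : k + 1 = N) (w : cells k → ZMod 2),
    integ (cellCast hk (d k w)) = 0

attribute [instance] CochainSystem.fintypeCells CochainSystem.decEqCells

namespace CochainSystem

variable {N : ℕ}

/-- The degree-`i` cochain space `Cⁱ`. -/
abbrev C (S : CochainSystem N) (i : ℕ) : Type := S.cells i → ZMod 2

/-- The indicator cochain `σ̃` of a cell `σ`. -/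
def indicator (S : CochainSystem N) {i : ℕ} (σ : S.cells i) : S.C i :=
  fun τ => if τ = σ then 1 else 0

/-- `∫ (u ∪ v) ∪ w` when the degrees add up to `N`. -/
def integ3 (S : CochainSystem N) {i j k : ℕ} (h : i + j + k = N)
    (u : S.C i) (v : S.C j) (w : S.C k) : ZMod 2 :=
  S.integ (cellCast h (S.cup (i + j) k (S.cup i j u v) w))

end CochainSystem

/-- The sign `(-1)ᵗ ∈ ℂ` of `t ∈ 𝔽₂`. -/
def sgn (t : ZMod 2) : ℂ := (-1 : ℂ) ^ t.val

open CochainSystem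

section Twisted

variable {N p q s : ℕ}

/-- A configuration of `ℤ₂`-gauge fields for the three colours `r`, `b`, `g`. -/
abbrev Config (S : CochainSystem N) (p q s : ℕ) : Type :=
  S.C (p + 1) × S.C (q + 1) × S.C (s + 1)

/-- The three-colour qubit space `V = ((Cᵖ × C^q × C^s) → ℂ)` of the twisted code. -/
abbrev QSpace (S : CochainSystem N) (p q s : ℕ) : Type := Config S p q s → ℂ

/-- The dressed Gauss operator `Ã^r_σ` of the twisted code:
`(Ã^r_σ ψ)(a,b,c) = (−1)^{∫ σ̃ ∪ b ∪ c} ψ(a + dσ̃, b, c)`. -/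
def gaussR (S : CochainSystem N) (h : p + 1 + (q + 1) + (s + 1) = N + 1)
    (σ : S.cells p) : QSpace S p q s → QSpace S p q s :=
  fun ψ x =>
    sgn (S.integ3 (show p + (q + 1) + (s + 1) = N by omega) (S.indicator σ) x.2.1 x.2.2)
      * ψ (x.1 + S.d p (S.indicator σ), x.2.1, x.2.2)

/-- The dressed Gauss operator `Ã^b_ξ`:
`(Ã^b_ξ ψ)(a,b,c) = (−1)^{∫ a ∪ ξ̃ ∪ c} ψ(a, b + dξ̃, c)`. -/
def gaussB (S : CochainSystem N) (h : p + 1 + (q + 1) + (s + 1) = N + 1)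
    (ξ : S.cells q) : QSpace S p q s → QSpace S p q s :=
  fun ψ x =>
    sgn (S.integ3 (show p + 1 + q + (s + 1) = N by omega) x.1 (S.indicator ξ) x.2.2)
      * ψ (x.1, x.2.1 + S.d q (S.indicator ξ), x.2.2)

/-- The dressed Gauss operator `Ã^g_ζ`:
`(Ã^g_ζ ψ)(a,b,c) = (−1)^{∫ a ∪ b ∪ ζ̃} ψ(a, b, c + dζ̃)`. -/
def gaussG (S : CochainSystem N) (h : p + 1 + (q + 1) + (s + 1) = N + 1)
    (ζ : S.cells s) : QSpace S p q s → QSpace S p q s :=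
  fun ψ x =>
    sgn (S.integ3 (show p + 1 + (q + 1) + s = N by omega) x.1 x.2.1 (S.indicator ζ))
      * ψ (x.1, x.2.1, x.2.2 + S.d s (S.indicator ζ))

/-- The diagonal flux operator `B^r_τ`, multiplying `ψ(a,b,c)` by `(−1)^{(da)(τ)}`. -/
def fluxR (S : CochainSystem N) (p q s : ℕ) (τ : S.cells (p + 2)) :
    QSpace S p q s → QSpace S p q s :=
  fun ψ x => sgn (S.d (p + 1) x.1 τ) * ψ x

/-- The diagonal flux operator `B^b_τ′`, multiplying `ψ(a,b,c)` by `(−1)^{(db)(τ′)}`. -/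
def fluxB (S : CochainSystem N) (p q s : ℕ) (τ' : S.cells (q + 2)) :
    QSpace S p q s → QSpace S p q s :=
  fun ψ x => sgn (S.d (q + 1) x.2.1 τ') * ψ x

/-- The diagonal flux operator `B^g_τ″`, multiplying `ψ(a,b,c)` by `(−1)^{(dc)(τ″)}`. -/
def fluxG (S : CochainSystem N) (p q s : ℕ) (τ'' : S.cells (s + 2)) :
    QSpace S p q s → QSpace S p q s :=
  fun ψ x => sgn (S.d (s + 1) x.2.2 τ'') * ψ x

/-- The zero-flux subspace: vectors supported on flat (cocycle) configurations. -/
def ZeroFlux (S : CochainSystem N) (p q s : ℕ) : Set (QSpace S p q s) :=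
  {ψ | ∀ x : Config S p q s, ψ x ≠ 0 →
    S.d (p + 1) x.1 = 0 ∧ S.d (q + 1) x.2.1 = 0 ∧ S.d (s + 1) x.2.2 = 0}

/-- The code space of the twisted code: vectors fixed by every dressed Gauss operator
and every flux operator. -/
def CodeSpace (S : CochainSystem N) (h : p + 1 + (q + 1) + (s + 1) = N + 1) :
    Set (QSpace S p q s) :=
  {ψ | (∀ σ : S.cells p, gaussR S h σ ψ = ψ)
    ∧ (∀ ξ : S.cells q, gaussB S h ξ ψ = ψ)
    ∧ (∀ ζ : S.cells s, gaussG S h ζ ψ = ψ)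
    ∧ (∀ τ : S.cells (p + 2), fluxR S p q s τ ψ = ψ)
    ∧ (∀ τ' : S.cells (q + 2), fluxB S p q s τ' ψ = ψ)
    ∧ (∀ τ'' : S.cells (s + 2), fluxG S p q s τ'' ψ = ψ)}

/-- The set of stabilizer generators of the twisted code. -/
def Stabilizer (S : CochainSystem N) (h : p + 1 + (q + 1) + (s + 1) = N + 1) :
    Set (QSpace S p q s → QSpace S p q s) :=
  {O | (∃ σ, O = gaussR S h σ) ∨ (∃ ξ, O = gaussB S h ξ) ∨ (∃ ζ, O = gaussG S h ζ)
    ∨ (∃ τ, O = fluxR S p q s τ) ∨ (∃ τ', O = fluxB S p q s τ')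
    ∨ (∃ τ'', O = fluxG S p q s τ'')}

end Twisted

/-!
Every generator is a twisted translation `ψ ↦ (x ↦ (-1)^{φ x} ψ (x + t))` by a flat
configuration `t`, so it preserves the zero-flux subspace. Two twisted translations agree at
`x` in either order as soon as `φ (x + t') - φ x = φ' (x + t) - φ' x` or `ψ (x + t + t') = 0`.
For a flux operator `t = 0` and its phase `(da)(τ)` is invariant under flat translations; for
two Gauss operators of the same colour neither phase sees the translated component. For two
Gauss operators of different colours, say `r` and `b`, the two sides are `∫ σ̃ ∪ dξ̃ ∪ c` and
`∫ dσ̃ ∪ ξ̃ ∪ c`, whose sum is `∫ σ̃ ∪ ξ̃ ∪ dc` by Leibniz and Stokes; it vanishes wherever `ψ`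
does not, since `ψ` has zero flux. On the code space, `B ψ = ψ` with `ψ x ≠ 0` forces the flux
at `x` to vanish.
-/

lemma cellCast_add {cells : ℕ → Type} {i j : ℕ} (h : i = j) (x y : cells i → ZMod 2) :
    cellCast h (x + y) = cellCast h x + cellCast h y := by
  subst h; rfl

lemma cellCast_zero {cells : ℕ → Type} {i j : ℕ} (h : i = j) :
    cellCast h (0 : cells i → ZMod 2) = 0 := by
  subst h; rfl

lemma cellCast_cellCast {cells : ℕ → Type} {i j k : ℕ} (h₁ : i = j) (h₂ : j = k)
    (x : cells i → ZMod 2) :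
    cellCast h₂ (cellCast h₁ x) = cellCast (h₁.trans h₂) x := by
  subst h₁ h₂; rfl

namespace CochainSystem

variable {N : ℕ} (S : CochainSystem N)

lemma cup_cellCast_left {m m' k : ℕ} (h : m = m') (x : S.C m) (w : S.C k) :
    S.cup m' k (cellCast h x) w = cellCast (congrArg (· + k) h) (S.cup m k x w) := by
  subst h; rfl

section integ3

variable {i j k : ℕ} (h : i + j + k = N)

lemma integ3_add_left (u u' : S.C i) (v : S.C j) (w : S.C k) :
    S.integ3 h (u + u') v w = S.integ3 h u v w + S.integ3 h u' v w := by
  simp only [integ3, map_add, LinearMap.add_apply, cellCast_add]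

lemma integ3_add_mid (u : S.C i) (v v' : S.C j) (w : S.C k) :
    S.integ3 h u (v + v') w = S.integ3 h u v w + S.integ3 h u v' w := by
  simp only [integ3, map_add, LinearMap.add_apply, cellCast_add]

lemma integ3_add_right (u : S.C i) (v : S.C j) (w w' : S.C k) :
    S.integ3 h u v (w + w') = S.integ3 h u v w + S.integ3 h u v w' := by
  simp only [integ3, map_add, cellCast_add]

lemma integ3_zero_left (v : S.C j) (w : S.C k) : S.integ3 h 0 v w = 0 := by
  simp only [integ3, map_zero, LinearMap.zero_apply, cellCast_zero]

lemma integ3_zero_mid (u : S.C i) (w : S.C k) : S.integ3 h u 0 w = 0 := by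
  simp only [integ3, map_zero, LinearMap.zero_apply, cellCast_zero]

lemma integ3_zero_right (u : S.C i) (v : S.C j) : S.integ3 h u v 0 = 0 := by
  simp only [integ3, map_zero, cellCast_zero]

end integ3

variable {i j k : ℕ}

/-- `∫ d(u ∪ v ∪ w) = 0`, expanded by the Leibniz rule. -/
theorem integ3_stokes
    (h₁ : i + 1 + j + k = N) (h₂ : i + (j + 1) + k = N) (h₃ : i + j + (k + 1) = N)
    (u : S.C i) (v : S.C j) (w : S.C k) :
    S.integ3 h₁ (S.d i u) v w + S.integ3 h₂ u (S.d j v) w + S.integ3 h₃ u v (S.d k w) = 0 := by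
  have hstokes := S.stokes (i + j + k) (by omega) (S.cup (i + j) k (S.cup i j u v) w)
  simp only [leibniz, map_add, LinearMap.add_apply, cup_cellCast_left, cellCast_add,
    cellCast_cellCast] at hstokes
  exact hstokes

lemma integ3_d_left_eq_d_mid (h₁ : i + 1 + j + k = N) (h₂ : i + (j + 1) + k = N)
    (u : S.C i) (v : S.C j) {w : S.C k} (hw : S.d k w = 0) :
    S.integ3 h₁ (S.d i u) v w = S.integ3 h₂ u (S.d j v) w := by
  have := S.integ3_stokes h₁ h₂ (by omega) u v w
  rwa [hw, integ3_zero_right, add_zero, CharTwo.add_eq_zero] at this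

lemma integ3_d_left_eq_d_right (h₁ : i + 1 + j + k = N) (h₃ : i + j + (k + 1) = N)
    (u : S.C i) {v : S.C j} (hv : S.d j v = 0) (w : S.C k) :
    S.integ3 h₁ (S.d i u) v w = S.integ3 h₃ u v (S.d k w) := by
  have := S.integ3_stokes h₁ (by omega) h₃ u v w
  rwa [hv, integ3_zero_mid, add_zero, CharTwo.add_eq_zero] at this

lemma integ3_d_mid_eq_d_right (h₂ : i + (j + 1) + k = N) (h₃ : i + j + (k + 1) = N)
    {u : S.C i} (hu : S.d i u = 0) (v : S.C j) (w : S.C k) :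
    S.integ3 h₂ u (S.d j v) w = S.integ3 h₃ u v (S.d k w) := by
  have := S.integ3_stokes (by omega) h₂ h₃ u v w
  rwa [hu, integ3_zero_left, zero_add, CharTwo.add_eq_zero] at this

end CochainSystem

lemma sgn_add (t₁ t₂ : ZMod 2) : sgn (t₁ + t₂) = sgn t₁ * sgn t₂ := by
  rw [sgn, sgn, sgn, ← pow_add, ZMod.val_add, ← neg_one_pow_eq_pow_mod_two]

lemma sgn_eq_one_iff {t : ZMod 2} : sgn t = 1 ↔ t = 0 := by
  rw [sgn, neg_one_pow_eq_one_iff_even (by norm_num), ← ZMod.natCast_eq_zero_iff_even,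
    ZMod.natCast_zmod_val]

lemma eq_zero_of_sgn_mul_eq_self {t : ZMod 2} {z : ℂ} (h : sgn t * z = z) (hz : z ≠ 0) :
    t = 0 :=
  sgn_eq_one_iff.mp (mul_right_cancel₀ hz (h.trans (one_mul z).symm))

section TwistedTranslation

variable {α : Type*} [AddCommMonoid α]

def twistedTranslate (φ : α → ZMod 2) (t : α) (ψ : α → ℂ) : α → ℂ :=
  fun x => sgn (φ x) * ψ (x + t)

lemma twistedTranslate_comm_apply {φ φ' : α → ZMod 2} {t t' x : α} {ψ : α → ℂ}
    (hφ : ψ (x + t + t') ≠ 0 → φ (x + t') - φ x = φ' (x + t) - φ' x) :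
    twistedTranslate φ t (twistedTranslate φ' t' ψ) x
      = twistedTranslate φ' t' (twistedTranslate φ t ψ) x := by
  simp only [twistedTranslate, ← mul_assoc, ← sgn_add, add_right_comm x t' t]
  by_cases hψ : ψ (x + t + t') = 0
  · rw [hψ, mul_zero, mul_zero]
  · rw [show φ x + φ' (x + t) = φ' x + φ (x + t') by linear_combination -hφ hψ]

lemma twistedTranslate_zero_comm {φ φ' : α → ZMod 2} {t : α} (hφ : ∀ x, φ (x + t) = φ x)
    (ψ : α → ℂ) :
    twistedTranslate φ 0 (twistedTranslate φ' t ψ)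
      = twistedTranslate φ' t (twistedTranslate φ 0 ψ) :=
  funext fun x => twistedTranslate_comm_apply fun _ => by rw [hφ, add_zero, sub_self, sub_self]

end TwistedTranslation

section TwistedCode

variable {N p q s : ℕ} (S : CochainSystem N)

def IsFlat (x : Config S p q s) : Prop :=
  S.d (p + 1) x.1 = 0 ∧ S.d (q + 1) x.2.1 = 0 ∧ S.d (s + 1) x.2.2 = 0

variable {S}

lemma IsFlat.of_add {x t : Config S p q s} (hxt : IsFlat S (x + t)) (ht : IsFlat S t) :
    IsFlat S x := by
  obtain ⟨h₁, h₂, h₃⟩ := hxt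
  simp only [Prod.fst_add, Prod.snd_add, map_add, ht.1, ht.2.1, ht.2.2, add_zero] at h₁ h₂ h₃
  exact ⟨h₁, h₂, h₃⟩

lemma isFlat_zero : IsFlat S (0 : Config S p q s) :=
  ⟨map_zero _, map_zero _, map_zero _⟩

lemma isFlat_d_zero_zero (u : S.C p) : IsFlat S ((S.d p u, 0, 0) : Config S p q s) :=
  ⟨S.d_comp_d _ _, map_zero _, map_zero _⟩

lemma isFlat_zero_d_zero (v : S.C q) : IsFlat S ((0, S.d q v, 0) : Config S p q s) :=
  ⟨map_zero _, S.d_comp_d _ _, map_zero _⟩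

lemma isFlat_zero_zero_d (w : S.C s) : IsFlat S ((0, 0, S.d s w) : Config S p q s) :=
  ⟨map_zero _, map_zero _, S.d_comp_d _ _⟩

lemma twistedTranslate_mem_zeroFlux {φ : Config S p q s → ZMod 2} {t : Config S p q s}
    (ht : IsFlat S t) {ψ : QSpace S p q s} (hψ : ψ ∈ ZeroFlux S p q s) :
    twistedTranslate φ t ψ ∈ ZeroFlux S p q s :=
  fun x hx => IsFlat.of_add (hψ (x + t) (right_ne_zero_of_mul hx)) ht

variable (S) (h : p + 1 + (q + 1) + (s + 1) = N + 1)

lemma gaussR_eq_twistedTranslate (σ : S.cells p) :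
    gaussR S h σ = twistedTranslate
      (fun x => S.integ3 (by omega) (S.indicator σ) x.2.1 x.2.2) (S.d p (S.indicator σ), 0, 0) := by
  funext ψ ⟨a, b, c⟩
  simp only [gaussR, twistedTranslate, Prod.mk_add_mk, add_zero]

lemma gaussB_eq_twistedTranslate (ξ : S.cells q) :
    gaussB S h ξ = twistedTranslate
      (fun x => S.integ3 (by omega) x.1 (S.indicator ξ) x.2.2) (0, S.d q (S.indicator ξ), 0) := by
  funext ψ ⟨a, b, c⟩
  simp only [gaussB, twistedTranslate, Prod.mk_add_mk, add_zero]

lemma gaussG_eq_twistedTranslate (ζ : S.cells s) :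
    gaussG S h ζ = twistedTranslate
      (fun x => S.integ3 (by omega) x.1 x.2.1 (S.indicator ζ)) (0, 0, S.d s (S.indicator ζ)) := by
  funext ψ ⟨a, b, c⟩
  simp only [gaussG, twistedTranslate, Prod.mk_add_mk, add_zero]

lemma fluxR_eq_twistedTranslate (τ : S.cells (p + 2)) :
    fluxR S p q s τ = twistedTranslate (fun x => S.d (p + 1) x.1 τ) 0 := by
  funext ψ x
  simp only [fluxR, twistedTranslate, add_zero]

lemma fluxB_eq_twistedTranslate (τ : S.cells (q + 2)) :
    fluxB S p q s τ = twistedTranslate (fun x => S.d (q + 1) x.2.1 τ) 0 := by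
  funext ψ x
  simp only [fluxB, twistedTranslate, add_zero]

lemma fluxG_eq_twistedTranslate (τ : S.cells (s + 2)) :
    fluxG S p q s τ = twistedTranslate (fun x => S.d (s + 1) x.2.2 τ) 0 := by
  funext ψ x
  simp only [fluxG, twistedTranslate, add_zero]

lemma exists_twistedTranslate_of_mem_stabilizer {O : QSpace S p q s → QSpace S p q s}
    (hO : O ∈ Stabilizer S h) : ∃ φ t, IsFlat S t ∧ O = twistedTranslate φ t := by
  rcases hO with ⟨σ, rfl⟩ | ⟨ξ, rfl⟩ | ⟨ζ, rfl⟩ | ⟨τ, rfl⟩ | ⟨τ, rfl⟩ | ⟨τ, rfl⟩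
  · exact ⟨_, _, isFlat_d_zero_zero _, gaussR_eq_twistedTranslate S h σ⟩
  · exact ⟨_, _, isFlat_zero_d_zero _, gaussB_eq_twistedTranslate S h ξ⟩
  · exact ⟨_, _, isFlat_zero_zero_d _, gaussG_eq_twistedTranslate S h ζ⟩
  · exact ⟨_, _, isFlat_zero, fluxR_eq_twistedTranslate S τ⟩
  · exact ⟨_, _, isFlat_zero, fluxB_eq_twistedTranslate S τ⟩
  · exact ⟨_, _, isFlat_zero, fluxG_eq_twistedTranslate S τ⟩

lemma stabilizer_mem_zeroFlux {O : QSpace S p q s → QSpace S p q s} (hO : O ∈ Stabilizer S h)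
    {ψ : QSpace S p q s} (hψ : ψ ∈ ZeroFlux S p q s) : O ψ ∈ ZeroFlux S p q s := by
  obtain ⟨φ, t, ht, rfl⟩ := exists_twistedTranslate_of_mem_stabilizer S h hO
  exact twistedTranslate_mem_zeroFlux ht hψ

variable {S h}

lemma fluxR_comm {O : QSpace S p q s → QSpace S p q s} (hO : O ∈ Stabilizer S h)
    (τ : S.cells (p + 2)) (ψ : QSpace S p q s) :
    fluxR S p q s τ (O ψ) = O (fluxR S p q s τ ψ) := by
  obtain ⟨φ, t, ht, rfl⟩ := exists_twistedTranslate_of_mem_stabilizer S h hO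
  rw [fluxR_eq_twistedTranslate]
  exact twistedTranslate_zero_comm (fun x => by rw [Prod.fst_add, map_add, ht.1, add_zero]) ψ

lemma fluxB_comm {O : QSpace S p q s → QSpace S p q s} (hO : O ∈ Stabilizer S h)
    (τ : S.cells (q + 2)) (ψ : QSpace S p q s) :
    fluxB S p q s τ (O ψ) = O (fluxB S p q s τ ψ) := by
  obtain ⟨φ, t, ht, rfl⟩ := exists_twistedTranslate_of_mem_stabilizer S h hO
  rw [fluxB_eq_twistedTranslate]
  exact twistedTranslate_zero_comm
    (fun x => by rw [Prod.snd_add, Prod.fst_add, map_add, ht.2.1, add_zero]) ψ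

lemma fluxG_comm {O : QSpace S p q s → QSpace S p q s} (hO : O ∈ Stabilizer S h)
    (τ : S.cells (s + 2)) (ψ : QSpace S p q s) :
    fluxG S p q s τ (O ψ) = O (fluxG S p q s τ ψ) := by
  obtain ⟨φ, t, ht, rfl⟩ := exists_twistedTranslate_of_mem_stabilizer S h hO
  rw [fluxG_eq_twistedTranslate]
  exact twistedTranslate_zero_comm
    (fun x => by rw [Prod.snd_add, Prod.snd_add, map_add, ht.2.2, add_zero]) ψ

lemma gaussR_comm_gaussR (σ σ' : S.cells p) (ψ : QSpace S p q s) :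
    gaussR S h σ (gaussR S h σ' ψ) = gaussR S h σ' (gaussR S h σ ψ) := by
  simp only [gaussR_eq_twistedTranslate]
  funext x
  exact twistedTranslate_comm_apply fun _ => by simp

lemma gaussB_comm_gaussB (ξ ξ' : S.cells q) (ψ : QSpace S p q s) :
    gaussB S h ξ (gaussB S h ξ' ψ) = gaussB S h ξ' (gaussB S h ξ ψ) := by
  simp only [gaussB_eq_twistedTranslate]
  funext x
  exact twistedTranslate_comm_apply fun _ => by simp

lemma gaussG_comm_gaussG (ζ ζ' : S.cells s) (ψ : QSpace S p q s) :
    gaussG S h ζ (gaussG S h ζ' ψ) = gaussG S h ζ' (gaussG S h ζ ψ) := by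
  simp only [gaussG_eq_twistedTranslate]
  funext x
  exact twistedTranslate_comm_apply fun _ => by simp

lemma gaussR_comm_gaussB (σ : S.cells p) (ξ : S.cells q) {ψ : QSpace S p q s}
    (hψ : ψ ∈ ZeroFlux S p q s) :
    gaussR S h σ (gaussB S h ξ ψ) = gaussB S h ξ (gaussR S h σ ψ) := by
  rw [gaussR_eq_twistedTranslate, gaussB_eq_twistedTranslate]
  funext x
  refine twistedTranslate_comm_apply fun hψx => ?_
  have hx : IsFlat S x :=
    (IsFlat.of_add (hψ _ hψx) (isFlat_zero_d_zero _)).of_add (isFlat_d_zero_zero _)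
  simp only [Prod.fst_add, Prod.snd_add, add_zero, integ3_add_left, integ3_add_mid,
    add_sub_cancel_left]
  exact (S.integ3_d_left_eq_d_mid _ _ _ _ hx.2.2).symm

lemma gaussR_comm_gaussG (σ : S.cells p) (ζ : S.cells s) {ψ : QSpace S p q s}
    (hψ : ψ ∈ ZeroFlux S p q s) :
    gaussR S h σ (gaussG S h ζ ψ) = gaussG S h ζ (gaussR S h σ ψ) := by
  rw [gaussR_eq_twistedTranslate, gaussG_eq_twistedTranslate]
  funext x
  refine twistedTranslate_comm_apply fun hψx => ?_
  have hx : IsFlat S x :=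
    (IsFlat.of_add (hψ _ hψx) (isFlat_zero_zero_d _)).of_add (isFlat_d_zero_zero _)
  simp only [Prod.fst_add, Prod.snd_add, add_zero, integ3_add_left, integ3_add_right,
    add_sub_cancel_left]
  exact (S.integ3_d_left_eq_d_right _ _ _ hx.2.1 _).symm

lemma gaussB_comm_gaussG (ξ : S.cells q) (ζ : S.cells s) {ψ : QSpace S p q s}
    (hψ : ψ ∈ ZeroFlux S p q s) :
    gaussB S h ξ (gaussG S h ζ ψ) = gaussG S h ζ (gaussB S h ξ ψ) := by
  rw [gaussB_eq_twistedTranslate, gaussG_eq_twistedTranslate]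
  funext x
  refine twistedTranslate_comm_apply fun hψx => ?_
  have hx : IsFlat S x :=
    (IsFlat.of_add (hψ _ hψx) (isFlat_zero_zero_d _)).of_add (isFlat_zero_d_zero _)
  simp only [Prod.fst_add, Prod.snd_add, add_zero, integ3_add_mid, integ3_add_right,
    add_sub_cancel_left]
  exact (S.integ3_d_mid_eq_d_right _ _ hx.1 _ _).symm

lemma gaussR_comm {O : QSpace S p q s → QSpace S p q s} (hO : O ∈ Stabilizer S h)
    (σ : S.cells p) {ψ : QSpace S p q s} (hψ : ψ ∈ ZeroFlux S p q s) :
    gaussR S h σ (O ψ) = O (gaussR S h σ ψ) := by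
  have hR : gaussR S h σ ∈ Stabilizer S h := Or.inl ⟨σ, rfl⟩
  rcases hO with ⟨σ', rfl⟩ | ⟨ξ, rfl⟩ | ⟨ζ, rfl⟩ | ⟨τ, rfl⟩ | ⟨τ, rfl⟩ | ⟨τ, rfl⟩
  · exact gaussR_comm_gaussR σ σ' ψ
  · exact gaussR_comm_gaussB σ ξ hψ
  · exact gaussR_comm_gaussG σ ζ hψ
  · exact (fluxR_comm hR τ ψ).symm
  · exact (fluxB_comm hR τ ψ).symm
  · exact (fluxG_comm hR τ ψ).symm

lemma gaussB_comm {O : QSpace S p q s → QSpace S p q s} (hO : O ∈ Stabilizer S h)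
    (ξ : S.cells q) {ψ : QSpace S p q s} (hψ : ψ ∈ ZeroFlux S p q s) :
    gaussB S h ξ (O ψ) = O (gaussB S h ξ ψ) := by
  have hB : gaussB S h ξ ∈ Stabilizer S h := Or.inr (Or.inl ⟨ξ, rfl⟩)
  rcases hO with ⟨σ, rfl⟩ | ⟨ξ', rfl⟩ | ⟨ζ, rfl⟩ | ⟨τ, rfl⟩ | ⟨τ, rfl⟩ | ⟨τ, rfl⟩
  · exact (gaussR_comm_gaussB σ ξ hψ).symm
  · exact gaussB_comm_gaussB ξ ξ' ψ
  · exact gaussB_comm_gaussG ξ ζ hψ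
  · exact (fluxR_comm hB τ ψ).symm
  · exact (fluxB_comm hB τ ψ).symm
  · exact (fluxG_comm hB τ ψ).symm

lemma gaussG_comm {O : QSpace S p q s → QSpace S p q s} (hO : O ∈ Stabilizer S h)
    (ζ : S.cells s) {ψ : QSpace S p q s} (hψ : ψ ∈ ZeroFlux S p q s) :
    gaussG S h ζ (O ψ) = O (gaussG S h ζ ψ) := by
  have hG : gaussG S h ζ ∈ Stabilizer S h := Or.inr (Or.inr (Or.inl ⟨ζ, rfl⟩))
  rcases hO with ⟨σ, rfl⟩ | ⟨ξ, rfl⟩ | ⟨ζ', rfl⟩ | ⟨τ, rfl⟩ | ⟨τ, rfl⟩ | ⟨τ, rfl⟩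
  · exact (gaussR_comm_gaussG σ ζ hψ).symm
  · exact (gaussB_comm_gaussG ξ ζ hψ).symm
  · exact gaussG_comm_gaussG ζ ζ' ψ
  · exact (fluxR_comm hG τ ψ).symm
  · exact (fluxB_comm hG τ ψ).symm
  · exact (fluxG_comm hG τ ψ).symm

lemma stabilizer_comm_of_mem_zeroFlux {O₁ O₂ : QSpace S p q s → QSpace S p q s}
    (hO₁ : O₁ ∈ Stabilizer S h) (hO₂ : O₂ ∈ Stabilizer S h) {ψ : QSpace S p q s}
    (hψ : ψ ∈ ZeroFlux S p q s) : O₁ (O₂ ψ) = O₂ (O₁ ψ) := by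
  rcases hO₁ with ⟨σ, rfl⟩ | ⟨ξ, rfl⟩ | ⟨ζ, rfl⟩ | ⟨τ, rfl⟩ | ⟨τ, rfl⟩ | ⟨τ, rfl⟩
  · exact gaussR_comm hO₂ σ hψ
  · exact gaussB_comm hO₂ ξ hψ
  · exact gaussG_comm hO₂ ζ hψ
  · exact fluxR_comm hO₂ τ ψ
  · exact fluxB_comm hO₂ τ ψ
  · exact fluxG_comm hO₂ τ ψ

lemma mem_zeroFlux_of_mem_codeSpace {ψ : QSpace S p q s} (hψ : ψ ∈ CodeSpace S h) :
    ψ ∈ ZeroFlux S p q s := by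
  obtain ⟨-, -, -, hR, hB, hG⟩ := hψ
  exact fun x hx => ⟨funext fun τ => eq_zero_of_sgn_mul_eq_self (congrFun (hR τ) x) hx,
    funext fun τ => eq_zero_of_sgn_mul_eq_self (congrFun (hB τ) x) hx,
    funext fun τ => eq_zero_of_sgn_mul_eq_self (congrFun (hG τ) x) hx⟩

end TwistedCode

/-- **Lemma 3 (conclusion).** Each dressed Gauss operator and each flux operator maps
the zero-flux subspace into itself, and any two stabilizer generators commute when
restricted to the zero-flux subspace.  Moreover every vector of the code space is
supported on zero-flux configurations, so all stabilizer generators pairwise commute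
on the code space. -/
theorem stabilizers_commute_on_zero_flux
    {N p q s : ℕ} (S : CochainSystem N) (h : p + 1 + (q + 1) + (s + 1) = N + 1) :
    (∀ O ∈ Stabilizer S h, ∀ ψ ∈ ZeroFlux S p q s, O ψ ∈ ZeroFlux S p q s) ∧
    (∀ O₁ ∈ Stabilizer S h, ∀ O₂ ∈ Stabilizer S h, ∀ ψ ∈ ZeroFlux S p q s,
      O₁ (O₂ ψ) = O₂ (O₁ ψ)) ∧
    (∀ ψ ∈ CodeSpace S h, ψ ∈ ZeroFlux S p q s) ∧
    (∀ O₁ ∈ Stabilizer S h, ∀ O₂ ∈ Stabilizer S h, ∀ ψ ∈ CodeSpace S h,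
      O₁ (O₂ ψ) = O₂ (O₁ ψ)) :=
  ⟨fun _ hO _ hψ => stabilizer_mem_zeroFlux S h hO hψ,
    fun _ hO₁ _ hO₂ _ hψ => stabilizer_comm_of_mem_zeroFlux hO₁ hO₂ hψ,
    fun _ hψ => mem_zeroFlux_of_mem_codeSpace hψ,
    fun _ hO₁ _ hO₂ _ hψ =>
      stabilizer_comm_of_mem_zeroFlux hO₁ hO₂ (mem_zeroFlux_of_mem_codeSpace hψ)⟩
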